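/- If C(x,y) is the generating function of connected crossing-free chord diagrams and D0(x,y) that of all crossing-free chord diagrams (x marking vertices, y marking chords), then D0(x,y) = 1 + C(x·D0(x,y), y). -/

import Mathlib

/-- Two chords `(p.1, p.2)` and `(q.1, q.2)` of a circle with vertices labeled
`0, 1, …, n-1` in circular order interleave, i.e. cross, when
`p.1 < q.1 < p.2 < q.2`. -/
def Interleaves {n : ℕ} (p q : Fin n × Fin n) : Prop :=
  p.1 < q.1 ∧ q.1 < p.2 ∧ p.2 < q.2

instance {n : ℕ} (p q : Fin n × Fin n) : Decidable (Interleaves p q) :=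
  inferInstanceAs (Decidable (_ ∧ _ ∧ _))

/-- The number of crossings of a set of chords (each chord recorded with its
endpoints in increasing order): the number of unordered pairs of chords whose
endpoints interleave around the circle. -/
def crossNum {n : ℕ} (D : Finset (Fin n × Fin n)) : ℕ :=
  ((D ×ˢ D).filter fun pq => Interleaves pq.1 pq.2).card

open MvPowerSeries

/-- A chord diagram on the `n` labeled points `0, …, n−1` of a circle is a set
of chords, each recorded with its endpoints in increasing order; isolated
vertices are allowed, chords may share endpoints, but there are no repeated
chords. `IsDiagram D` states that the chords are correctly normalized. -/
def IsDiagram {n : ℕ} (D : Finset (Fin n × Fin n)) : Prop :=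
  ∀ p ∈ D, p.1 < p.2

/-- The generating function `D₀(x,y)` of crossing-free chord diagrams on a
circle, where `x` (variable `0`) marks vertices and `y` (variable `1`) marks
chords. -/
noncomputable def diagGF0 : MvPowerSeries (Fin 2) ℚ :=
  fun e => (Nat.card {D : Finset (Fin (e 0) × Fin (e 0)) //
    IsDiagram D ∧ crossNum D = 0 ∧ D.card = e 1} : ℚ)

/-- The graph on the `n` points of the circle whose edges are the chords of the
diagram `D`. -/
def diagGraph {n : ℕ} (D : Finset (Fin n × Fin n)) : SimpleGraph (Fin n) :=
  SimpleGraph.fromRel (fun a b => (a, b) ∈ D)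

/-- The generating function `C(x,y)` of connected crossing-free chord diagrams
(connected as graphs; a single isolated vertex is connected), where `x`
(variable `0`) marks vertices and `y` (variable `1`) marks chords. -/
noncomputable def connDiagGF0 : MvPowerSeries (Fin 2) ℚ :=
  fun e => (Nat.card {D : Finset (Fin (e 0) × Fin (e 0)) //
    IsDiagram D ∧ crossNum D = 0 ∧ D.card = e 1 ∧ (diagGraph D).Connected} : ℚ)

/-!
In a crossing-free diagram on `n ≥ 1` points, no chord outside the connected component of the
vertex `0` passes over a vertex of that component: a path from `0` to this vertex would have to
cross the chord. So the diagram is a connected diagram on the `k` vertices of the component,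
together with a crossing-free diagram in each of the `k` gaps that follow these vertices. A vertex
followed by a crossing-free diagram is counted by `x·D₀`, so such sequences of `k` blocks are
counted by `(x·D₀)^k` (by induction on `k`, cutting off the last block), and summing over the
connected part gives `D₀ = 1 + C(x·D₀, y)`.
-/

open Finset

namespace ChordDiagram

variable {a b n : ℕ}

theorem crossNum_eq_zero_iff {D : Finset (Fin n × Fin n)} :
    crossNum D = 0 ↔ ∀ p ∈ D, ∀ q ∈ D, ¬Interleaves p q := by
  simp only [crossNum, card_eq_zero, filter_eq_empty_iff, mem_product]
  exact ⟨fun h p hp q hq => h (x := (p, q)) ⟨hp, hq⟩, fun h x hx => h _ hx.1 _ hx.2⟩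

theorem crossNum_mono {D D' : Finset (Fin n × Fin n)} (h : D ⊆ D') : crossNum D ≤ crossNum D' :=
  card_le_card (filter_subset_filter _ (product_subset_product h h))

theorem isDiagram_of_subset {D D' : Finset (Fin n × Fin n)} (hD' : IsDiagram D') (h : D ⊆ D') :
    IsDiagram D :=
  fun p hp => hD' p (h hp)

theorem crossNum_union_eq_zero {C G : Finset (Fin n × Fin n)} (hC : crossNum C = 0)
    (hG : crossNum G = 0) (hCG : ∀ p ∈ C, ∀ q ∈ G, ¬Interleaves p q ∧ ¬Interleaves q p) :
    crossNum (C ∪ G) = 0 := by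
  rw [crossNum_eq_zero_iff] at hC hG ⊢
  intro p hp q hq
  rcases mem_union.1 hp with hp | hp <;> rcases mem_union.1 hq with hq | hq
  exacts [hC p hp q hq, (hCG p hp q hq).1, (hCG q hq p hp).2, hG p hp q hq]

def mapChords (f : Fin a ↪o Fin b) (E : Finset (Fin a × Fin a)) : Finset (Fin b × Fin b) :=
  E.map (f.toEmbedding.prodMap f.toEmbedding)

noncomputable def pullChords (f : Fin a ↪o Fin b) (G : Finset (Fin b × Fin b)) :
    Finset (Fin a × Fin a) :=
  G.preimage (Prod.map f f) (f.injective.prodMap f.injective).injOn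

section Relabel

variable (f : Fin a ↪o Fin b)

@[simp]
theorem mem_pullChords {G : Finset (Fin b × Fin b)} {p : Fin a × Fin a} :
    p ∈ pullChords f G ↔ (f p.1, f p.2) ∈ G :=
  mem_preimage

theorem mem_mapChords {E : Finset (Fin a × Fin a)} {q : Fin b × Fin b} :
    q ∈ mapChords f E ↔ ∃ p ∈ E, (f p.1, f p.2) = q := by
  simp [mapChords, Prod.ext_iff]

@[simp]
theorem map_mem_mapChords {E : Finset (Fin a × Fin a)} {p : Fin a × Fin a} :
    (f p.1, f p.2) ∈ mapChords f E ↔ p ∈ E := by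
  simp [mapChords, Prod.ext_iff]

theorem card_mapChords (E : Finset (Fin a × Fin a)) : (mapChords f E).card = E.card :=
  card_map _

theorem pullChords_mapChords (E : Finset (Fin a × Fin a)) : pullChords f (mapChords f E) = E :=
  preimage_map _ E

theorem pullChords_union (G G' : Finset (Fin b × Fin b)) :
    pullChords f (G ∪ G') = pullChords f G ∪ pullChords f G' :=
  preimage_union _

theorem pullChords_eq_empty {G : Finset (Fin b × Fin b)} (h : ∀ q ∈ G, q.1 ∉ Set.range f) :
    pullChords f G = ∅ :=
  eq_empty_of_forall_notMem fun p hp => h _ ((mem_pullChords f).1 hp) ⟨p.1, rfl⟩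

theorem pullChords_mapChords_union (E : Finset (Fin a × Fin a)) {G : Finset (Fin b × Fin b)}
    (hG : ∀ q ∈ G, q.1 ∉ Set.range f) : pullChords f (mapChords f E ∪ G) = E := by
  rw [pullChords_union, pullChords_mapChords, pullChords_eq_empty f hG, union_empty]

theorem mem_mapChords_pullChords {G : Finset (Fin b × Fin b)} {q : Fin b × Fin b} :
    q ∈ mapChords f (pullChords f G) ↔ q ∈ G ∧ q.1 ∈ Set.range f ∧ q.2 ∈ Set.range f := by
  constructor
  · intro hq
    obtain ⟨p, hp, rfl⟩ := (mem_mapChords f).1 hq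
    exact ⟨(mem_pullChords f).1 hp, ⟨_, rfl⟩, ⟨_, rfl⟩⟩
  · rintro ⟨hq, ⟨x, hx⟩, ⟨y, hy⟩⟩
    obtain ⟨u, v⟩ := q
    subst hx hy
    exact (map_mem_mapChords f (p := (x, y))).2 ((mem_pullChords f).2 hq)

theorem isDiagram_mapChords {E : Finset (Fin a × Fin a)} (hE : IsDiagram E) :
    IsDiagram (mapChords f E) := by
  intro q hq
  obtain ⟨p, hp, rfl⟩ := (mem_mapChords f).1 hq
  exact f.strictMono (hE p hp)

theorem isDiagram_pullChords {G : Finset (Fin b × Fin b)} (hG : IsDiagram G) :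
    IsDiagram (pullChords f G) :=
  fun p hp => f.lt_iff_lt.1 (hG (f p.1, f p.2) ((mem_pullChords f).1 hp))

theorem crossNum_mapChords (E : Finset (Fin a × Fin a)) :
    crossNum (mapChords f E) = crossNum E := by
  rw [crossNum, mapChords, ← prodMap_map_product, filter_map, card_map, crossNum]
  congr 2
  ext ⟨p, q⟩
  simp [Interleaves]

theorem crossNum_pullChords_le (G : Finset (Fin b × Fin b)) :
    crossNum (pullChords f G) ≤ crossNum G :=
  crossNum_mapChords f (pullChords f G) ▸
    crossNum_mono fun _ hq => ((mem_mapChords_pullChords f).1 hq).1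

end Relabel

def InGaps (S : Finset (Fin n)) (G : Finset (Fin n × Fin n)) : Prop :=
  ∀ p ∈ G, ∀ s ∈ S, s < p.1 ∨ p.2 < s

theorem not_interleaves_of_inGaps {S : Finset (Fin n)} {G : Finset (Fin n × Fin n)}
    (hG : InGaps S G) {p q : Fin n × Fin n} (hp₁ : p.1 ∈ S) (hp₂ : p.2 ∈ S) (hq : q ∈ G) :
    ¬Interleaves p q ∧ ¬Interleaves q p := by
  have h₁ := hG q hq _ hp₁
  have h₂ := hG q hq _ hp₂
  constructor <;> rintro ⟨h, h', h''⟩ <;> rcases h₁ with h₁ | h₁ <;> rcases h₂ with h₂ | h₂ <;>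
    order

theorem notMem_of_inGaps {S : Finset (Fin n)} {G : Finset (Fin n × Fin n)} (hG : InGaps S G)
    (hGd : IsDiagram G) {q : Fin n × Fin n} (hq : q ∈ G) : q.1 ∉ S ∧ q.2 ∉ S := by
  have := hGd q hq
  refine ⟨fun h => ?_, fun h => ?_⟩ <;> rcases hG q hq _ h with h' | h' <;> order

theorem diagGraph_adj {D : Finset (Fin n × Fin n)} {u v : Fin n} :
    (diagGraph D).Adj u v ↔ u ≠ v ∧ ((u, v) ∈ D ∨ (v, u) ∈ D) :=
  SimpleGraph.fromRel_adj _ _ _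

theorem diagGraph_pullChords (f : Fin a ↪o Fin b) (G : Finset (Fin b × Fin b)) :
    diagGraph (pullChords f G) = (diagGraph G).comap f := by
  ext u v
  simp [diagGraph_adj, f.injective.ne_iff]

theorem exists_reachable_comap {V W : Type*} {G : SimpleGraph V} {f : W → V}
    (hf : ∀ w v, G.Adj (f w) v → v ∈ Set.range f) {a : W} {v : V} (h : G.Reachable (f a) v) :
    ∃ b, f b = v ∧ (G.comap f).Reachable a b := by
  obtain ⟨p⟩ := h
  generalize hu : f a = u at p
  induction p generalizing a with
  | nil => exact ⟨a, hu, .rfl⟩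
  | cons huw _ ih =>
    subst hu
    obtain ⟨c, rfl⟩ := hf _ _ huw
    obtain ⟨b, hb, hcb⟩ := ih rfl
    exact ⟨b, hb, (show (G.comap f).Adj a c from huw).reachable.trans hcb⟩

theorem reachable_endpoint_of_reachable_under_chord {D : Finset (Fin n × Fin n)}
    (hD : IsDiagram D) (hX : crossNum D = 0) {p : Fin n × Fin n} (hp : p ∈ D) {u v : Fin n}
    (hu : u < p.1 ∨ p.2 < u) (hv₁ : p.1 < v) (hv₂ : v < p.2) (h : (diagGraph D).Reachable u v) :
    (diagGraph D).Reachable u p.1 ∨ (diagGraph D).Reachable u p.2 := by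
  obtain ⟨w⟩ := h
  induction w with
  | nil => rcases hu with hu | hu <;> order
  | @cons u x v hux w ih =>
    have hux' := hux.reachable
    rcases lt_trichotomy x p.1 with hx | hx | hx
    · exact (ih (Or.inl hx) hv₁ hv₂).imp hux'.trans hux'.trans
    · exact Or.inl (hx ▸ hux')
    rcases lt_trichotomy x p.2 with hx' | hx' | hx'
    · -- `x` is under `p` and `u` is not, so the chord `ux` crosses `p`
      obtain ⟨-, hmem⟩ := diagGraph_adj.1 hux
      rcases hu with hu | hu
      · have hmem : (u, x) ∈ D := hmem.resolve_right fun h => (hD _ h).not_gt (hu.trans hx)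
        exact absurd ⟨hu, hx, hx'⟩ (crossNum_eq_zero_iff.1 hX _ hmem _ hp)
      · have hmem : (x, u) ∈ D := hmem.resolve_left fun h => (hD _ h).not_gt (hx'.trans hu)
        exact absurd ⟨hx, hx', hu⟩ (crossNum_eq_zero_iff.1 hX _ hp _ hmem)
    · exact Or.inr (hx' ▸ hux')
    · exact (ih (Or.inr hx') hv₁ hv₂).imp hux'.trans hux'.trans

section RootComponent

variable [NeZero n] {D : Finset (Fin n × Fin n)}

open Classical in
noncomputable def rootComponent (D : Finset (Fin n × Fin n)) : Finset (Fin n) :=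
  univ.filter ((diagGraph D).Reachable 0)

theorem mem_rootComponent {x : Fin n} : x ∈ rootComponent D ↔ (diagGraph D).Reachable 0 x := by
  simp [rootComponent]

theorem zero_mem_rootComponent : (0 : Fin n) ∈ rootComponent D :=
  mem_rootComponent.2 .rfl

theorem mem_rootComponent_of_adj {u v : Fin n} (huv : (diagGraph D).Adj u v)
    (hu : u ∈ rootComponent D) : v ∈ rootComponent D :=
  mem_rootComponent.2 ((mem_rootComponent.1 hu).trans huv.reachable)

theorem fst_mem_rootComponent_iff {p : Fin n × Fin n} (hp : p ∈ D) :
    p.1 ∈ rootComponent D ↔ p.2 ∈ rootComponent D := by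
  by_cases h : p.1 = p.2
  · rw [h]
  have hadj : (diagGraph D).Adj p.1 p.2 := diagGraph_adj.2 ⟨h, Or.inl hp⟩
  exact ⟨mem_rootComponent_of_adj hadj, mem_rootComponent_of_adj hadj.symm⟩

noncomputable def rootChords (D : Finset (Fin n × Fin n)) : Finset (Fin n × Fin n) :=
  D.filter fun p => p.1 ∈ rootComponent D

noncomputable def gapChords (D : Finset (Fin n × Fin n)) : Finset (Fin n × Fin n) :=
  D.filter fun p => p.1 ∉ rootComponent D

theorem card_rootChords_add_card_gapChords (D : Finset (Fin n × Fin n)) :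
    (rootChords D).card + (gapChords D).card = D.card :=
  card_filter_add_card_filter_not _

theorem inGaps_gapChords (hD : IsDiagram D) (hX : crossNum D = 0) :
    InGaps (rootComponent D) (gapChords D) := by
  intro p hp s hs
  obtain ⟨hp, h₁⟩ := mem_filter.1 hp
  have h₂ : p.2 ∉ rootComponent D := (fst_mem_rootComponent_iff hp).not.1 h₁
  by_contra! hps
  have hs₁ : p.1 < s := lt_of_le_of_ne hps.1 (by rintro rfl; exact h₁ hs)
  have hs₂ : s < p.2 := lt_of_le_of_ne hps.2 (by rintro rfl; exact h₂ hs)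
  have h0 : (0 : Fin n) < p.1 :=
    lt_of_le_of_ne (Fin.zero_le _) fun h => h₁ (h ▸ zero_mem_rootComponent)
  rcases reachable_endpoint_of_reachable_under_chord hD hX hp (Or.inl h0) hs₁ hs₂
    (mem_rootComponent.1 hs) with h | h
  exacts [h₁ (mem_rootComponent.2 h), h₂ (mem_rootComponent.2 h)]

theorem mapChords_pullChords_rootComponent (D : Finset (Fin n × Fin n)) {k : ℕ}
    (hk : (rootComponent D).card = k) :
    mapChords ((rootComponent D).orderEmbOfFin hk)
      (pullChords ((rootComponent D).orderEmbOfFin hk) D) = rootChords D := by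
  ext p
  rw [mem_mapChords_pullChords, range_orderEmbOfFin, rootChords, mem_filter, mem_coe, mem_coe]
  exact and_congr_right fun hp => and_iff_left_of_imp (fst_mem_rootComponent_iff hp).1

theorem connected_pullChords_rootComponent {k : ℕ} (hk : (rootComponent D).card = k) :
    (diagGraph (pullChords ((rootComponent D).orderEmbOfFin hk) D)).Connected := by
  set σ := (rootComponent D).orderEmbOfFin hk
  have hσ : Set.range σ = rootComponent D := range_orderEmbOfFin _ hk
  have hclosed (w : Fin k) (v : Fin n) (h : (diagGraph D).Adj (σ w) v) : v ∈ Set.range σ :=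
    hσ ▸ mem_rootComponent_of_adj h (orderEmbOfFin_mem _ hk w)
  have : Nonempty (Fin k) := ⟨⟨0, hk ▸ card_pos.2 ⟨0, zero_mem_rootComponent⟩⟩⟩
  rw [diagGraph_pullChords, SimpleGraph.connected_iff]
  refine ⟨fun a b => ?_, inferInstance⟩
  obtain ⟨b', hb', hab'⟩ := exists_reachable_comap hclosed
    ((mem_rootComponent.1 (orderEmbOfFin_mem _ hk a)).symm.trans
      (mem_rootComponent.1 (orderEmbOfFin_mem _ hk b)))
  rwa [σ.injective hb'] at hab'

section Assemble

variable {S : Finset (Fin n)} {k : ℕ} {C : Finset (Fin k × Fin k)} {G : Finset (Fin n × Fin n)}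

theorem rootComponent_mapChords_union (hk : S.card = k) (h0 : (0 : Fin n) ∈ S)
    (hC : (diagGraph C).Connected) (hG : InGaps S G) (hGd : IsDiagram G) :
    rootComponent (mapChords (S.orderEmbOfFin hk) C ∪ G) = S := by
  set σ := S.orderEmbOfFin hk
  set D := mapChords σ C ∪ G
  have hσ : Set.range σ = S := range_orderEmbOfFin _ hk
  obtain ⟨a₀, ha₀⟩ : (0 : Fin n) ∈ Set.range σ := hσ ▸ h0
  ext x
  constructor
  · intro hx
    have hclosed (w : Fin k) (v : Fin n) (h : (diagGraph D).Adj (σ w) v) : v ∈ Set.range σ := by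
      have hσw : σ w ∈ S := orderEmbOfFin_mem _ hk w
      rcases (diagGraph_adj.1 h).2 with h | h <;> rcases mem_union.1 h with h | h
      · obtain ⟨p, -, hp⟩ := (mem_mapChords σ).1 h
        exact ⟨p.2, (Prod.ext_iff.1 hp).2⟩
      · exact absurd hσw (notMem_of_inGaps hG hGd h).1
      · obtain ⟨p, -, hp⟩ := (mem_mapChords σ).1 h
        exact ⟨p.1, (Prod.ext_iff.1 hp).1⟩
      · exact absurd hσw (notMem_of_inGaps hG hGd h).2
    obtain ⟨b, rfl, -⟩ := exists_reachable_comap hclosed (ha₀ ▸ mem_rootComponent.1 hx)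
    exact orderEmbOfFin_mem _ hk b
  · intro hx
    obtain ⟨b, rfl⟩ : x ∈ Set.range σ := hσ ▸ hx
    have hpull : pullChords σ D = C := pullChords_mapChords_union σ C fun q hq =>
      hσ ▸ (notMem_of_inGaps hG hGd hq).1
    have hab : (diagGraph (pullChords σ D)).Reachable a₀ b := hpull ▸ hC.preconnected a₀ b
    rw [diagGraph_pullChords] at hab
    exact mem_rootComponent.2 (ha₀ ▸ hab.map (SimpleGraph.Hom.comap σ _))

theorem rootChords_mapChords_union (hk : S.card = k) (h0 : (0 : Fin n) ∈ S)
    (hC : (diagGraph C).Connected) (hG : InGaps S G) (hGd : IsDiagram G) :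
    rootChords (mapChords (S.orderEmbOfFin hk) C ∪ G) = mapChords (S.orderEmbOfFin hk) C ∧
      gapChords (mapChords (S.orderEmbOfFin hk) C ∪ G) = G := by
  have hC' : ∀ p ∈ mapChords (S.orderEmbOfFin hk) C, p.1 ∈ S := fun p hp => by
    obtain ⟨p', -, rfl⟩ := (mem_mapChords _).1 hp
    exact orderEmbOfFin_mem _ hk _
  have hG' : ∀ p ∈ G, p.1 ∉ S := fun p hp => (notMem_of_inGaps hG hGd hp).1
  rw [rootChords, gapChords, rootComponent_mapChords_union hk h0 hC hG hGd, filter_union,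
    filter_union, filter_true_of_mem hC', filter_false_of_mem hG',
    filter_false_of_mem fun p hp h => h (hC' p hp), filter_true_of_mem hG', union_empty,
    empty_union]
  exact ⟨rfl, rfl⟩

end Assemble

end RootComponent

abbrev NoncrossingDiagram (n m : ℕ) : Type :=
  {D : Finset (Fin n × Fin n) // IsDiagram D ∧ crossNum D = 0 ∧ D.card = m}

abbrev ConnectedDiagram (n m : ℕ) : Type :=
  {D : Finset (Fin n × Fin n) //
    IsDiagram D ∧ crossNum D = 0 ∧ D.card = m ∧ (diagGraph D).Connected}

/-- Marks `z.1` and chords `z.2`. For `n > 0` the first condition says that `0` is marked; in this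
form it also admits the empty diagram without marks. -/
def IsBlockDiagram (z : Finset (Fin n) × Finset (Fin n × Fin n)) : Prop :=
  (∀ x, ∃ s ∈ z.1, s ≤ x) ∧ IsDiagram z.2 ∧ crossNum z.2 = 0 ∧ InGaps z.1 z.2

/-- A sequence of `k` blocks, each a mark followed by a crossing-free diagram. -/
abbrev BlockSeq (k n q : ℕ) : Type :=
  {z : Finset (Fin n) × Finset (Fin n × Fin n) // IsBlockDiagram z ∧ z.1.card = k ∧ z.2.card = q}

theorem noncrossing_mapChords_union {S : Finset (Fin n)} {k : ℕ} (hk : S.card = k)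
    {C : Finset (Fin k × Fin k)} (hCd : IsDiagram C) (hCX : crossNum C = 0)
    {G : Finset (Fin n × Fin n)} (hG : InGaps S G) (hGd : IsDiagram G) (hGX : crossNum G = 0) :
    let D := mapChords (S.orderEmbOfFin hk) C ∪ G
    IsDiagram D ∧ crossNum D = 0 ∧ D.card = C.card + G.card := by
  have hC : ∀ p ∈ mapChords (S.orderEmbOfFin hk) C, p.1 ∈ S ∧ p.2 ∈ S := fun p hp => by
    obtain ⟨p', -, rfl⟩ := (mem_mapChords _).1 hp
    exact ⟨orderEmbOfFin_mem _ hk _, orderEmbOfFin_mem _ hk _⟩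
  refine ⟨fun p hp => ?_, ?_, ?_⟩
  · rcases mem_union.1 hp with hp | hp
    exacts [isDiagram_mapChords _ hCd p hp, hGd p hp]
  · refine crossNum_union_eq_zero ((crossNum_mapChords _ C).trans hCX) hGX fun p hp q hq => ?_
    exact not_interleaves_of_inGaps hG (hC p hp).1 (hC p hp).2 hq
  · rw [card_union_of_disjoint, card_mapChords]
    exact disjoint_left.2 fun p hp hp' => (notMem_of_inGaps hG hGd hp').1 (hC p hp).1

theorem pullChords_orderEmbOfFin_congr {S T : Finset (Fin n)} (h : T = S) {k : ℕ}
    (hT : T.card = k) (hS : S.card = k) (G : Finset (Fin n × Fin n)) :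
    pullChords (T.orderEmbOfFin hT) G = pullChords (S.orderEmbOfFin hS) G := by
  subst h
  rfl

section RootDecomposition

variable [NeZero n]

theorem zero_mem_of_forall_exists_le {S : Finset (Fin n)} (hS : ∀ x, ∃ s ∈ S, s ≤ x) :
    (0 : Fin n) ∈ S := by
  obtain ⟨s, hs, h⟩ := hS 0
  rwa [le_antisymm h (Fin.zero_le s)] at hs

noncomputable def rootStat (D : Finset (Fin n × Fin n)) : ℕ × ℕ :=
  ((rootComponent D).card, (rootChords D).card)

theorem connectedDiagram_pullChords_rootComponent {D : Finset (Fin n × Fin n)}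
    (hD : IsDiagram D) (hX : crossNum D = 0) {k : ℕ} (hk : (rootComponent D).card = k) :
    let C := pullChords ((rootComponent D).orderEmbOfFin hk) D
    IsDiagram C ∧ crossNum C = 0 ∧ C.card = (rootChords D).card ∧ (diagGraph C).Connected :=
  ⟨isDiagram_pullChords _ hD, Nat.eq_zero_of_le_zero (hX ▸ crossNum_pullChords_le _ D),
    by rw [← card_mapChords, mapChords_pullChords_rootComponent],
    connected_pullChords_rootComponent hk⟩

theorem isBlockDiagram_rootComponent_gapChords {D : Finset (Fin n × Fin n)} (hD : IsDiagram D)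
    (hX : crossNum D = 0) : IsBlockDiagram (rootComponent D, gapChords D) :=
  ⟨fun x => ⟨0, zero_mem_rootComponent, Fin.zero_le x⟩, isDiagram_of_subset hD (filter_subset _ _),
    Nat.eq_zero_of_le_zero (hX ▸ crossNum_mono (filter_subset _ _)), inGaps_gapChords hD hX⟩

theorem rootStat_mapChords_union {S : Finset (Fin n)} {G : Finset (Fin n × Fin n)} {k : ℕ}
    (hk : S.card = k) (hSG : IsBlockDiagram (S, G)) {C : Finset (Fin k × Fin k)}
    (hC : (diagGraph C).Connected) :
    rootStat (mapChords (S.orderEmbOfFin hk) C ∪ G) = (k, C.card) := by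
  have h0 := zero_mem_of_forall_exists_le hSG.1
  rw [rootStat, rootComponent_mapChords_union hk h0 hC hSG.2.2.2 hSG.2.1,
    (rootChords_mapChords_union hk h0 hC hSG.2.2.2 hSG.2.1).1, card_mapChords, hk]

noncomputable def rootDecomposition {m k j : ℕ} (hjm : j ≤ m) :
    {D : NoncrossingDiagram n m // rootStat D.1 = (k, j)} ≃
      ConnectedDiagram k j × BlockSeq k n (m - j) where
  toFun := fun ⟨⟨D, hD⟩, hkj⟩ =>
    have hk : (rootComponent D).card = k := congrArg Prod.fst hkj
    have hj : (rootChords D).card = j := congrArg Prod.snd hkj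
    have hC := connectedDiagram_pullChords_rootComponent hD.1 hD.2.1 hk
    (⟨_, hC.1, hC.2.1, hC.2.2.1.trans hj, hC.2.2.2⟩,
      ⟨(rootComponent D, gapChords D), isBlockDiagram_rootComponent_gapChords hD.1 hD.2.1, hk,
        by have := card_rootChords_add_card_gapChords D; have := hD.2.2; dsimp only; omega⟩)
  invFun := fun ⟨⟨C, hC⟩, ⟨(S, G), hSG⟩⟩ =>
    have hD := noncrossing_mapChords_union hSG.2.1 hC.1 hC.2.1 hSG.1.2.2.2 hSG.1.2.1 hSG.1.2.2.1
    ⟨⟨_, hD.1, hD.2.1, by rw [hD.2.2, hC.2.2.1, hSG.2.2]; omega⟩,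
      hC.2.2.1 ▸ rootStat_mapChords_union hSG.2.1 hSG.1 hC.2.2.2⟩
  left_inv := fun ⟨⟨D, _⟩, _⟩ => Subtype.ext <| Subtype.ext <|
    (congrArg (· ∪ gapChords D) (mapChords_pullChords_rootComponent D _)).trans
      (filter_union_filter_not_eq _ _)
  right_inv := fun ⟨⟨C, hC⟩, ⟨(S, G), hSG⟩⟩ => by
    obtain ⟨⟨hS, hGd, -, hG⟩, hk, -⟩ := hSG
    have h0 := zero_mem_of_forall_exists_le hS
    have hroot := rootComponent_mapChords_union hk h0 hC.2.2.2 hG hGd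
    refine Prod.ext (Subtype.ext ?_)
      (Subtype.ext (Prod.ext hroot (rootChords_mapChords_union hk h0 hC.2.2.2 hG hGd).2))
    refine (pullChords_orderEmbOfFin_congr hroot _ hk _).trans ?_
    refine pullChords_mapChords_union _ _ fun q hq => ?_
    rw [range_orderEmbOfFin]
    exact (notMem_of_inGaps hG hGd hq).1

end RootDecomposition

theorem natCard_eq_sum_natCard_fiber {X ι : Type*} [Finite X] (f : X → ι) (t : Finset ι)
    (hf : ∀ x, f x ∈ t) : Nat.card X = ∑ i ∈ t, Nat.card {x // f x = i} := by
  rw [← Nat.card_congr (Equiv.sigmaFiberEquiv fun x => (⟨f x, hf x⟩ : t)), Nat.card_sigma,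
    ← sum_coe_sort t]
  exact sum_congr rfl fun i _ => Nat.card_congr (Equiv.subtypeEquivRight fun _ => Subtype.ext_iff)

theorem card_noncrossingDiagram [NeZero n] (m : ℕ) :
    Nat.card (NoncrossingDiagram n m) = ∑ kj ∈ range (n + 1) ×ˢ range (m + 1),
      Nat.card (ConnectedDiagram kj.1 kj.2) * Nat.card (BlockSeq kj.1 n (m - kj.2)) := by
  rw [natCard_eq_sum_natCard_fiber (fun D : NoncrossingDiagram n m => rootStat D.1) _ fun D => ?_]
  · refine sum_congr rfl fun ⟨k, j⟩ hkj => ?_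
    rw [← Nat.card_prod]
    exact Nat.card_congr (rootDecomposition (by simp only [mem_product, mem_range] at hkj; omega))
  · have hk : (rootComponent D.1).card ≤ n := (card_le_univ _).trans_eq (Fintype.card_fin n)
    have hj : (rootChords D.1).card ≤ m := (card_filter_le _ _).trans_eq D.2.2.2
    simp only [rootStat, mem_product, mem_range]
    omega

noncomputable def restrict (f : Fin a ↪o Fin b) (x : Finset (Fin b) × Finset (Fin b × Fin b)) :
    Finset (Fin a) × Finset (Fin a × Fin a) :=
  (x.1.preimage f f.injective.injOn, pullChords f x.2)

@[simp]
theorem mem_restrict_fst (f : Fin a ↪o Fin b) {z : Finset (Fin b) × Finset (Fin b × Fin b)}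
    {s : Fin a} : s ∈ (restrict f z).1 ↔ f s ∈ z.1 :=
  mem_preimage (hf := f.injective.injOn)

theorem inGaps_restrict (f : Fin a ↪o Fin b) {z : Finset (Fin b) × Finset (Fin b × Fin b)}
    (hz : InGaps z.1 z.2) : InGaps (restrict f z).1 (restrict f z).2 := by
  intro p hp s hs
  have := hz _ ((mem_pullChords f).1 hp) _ ((mem_restrict_fst f).1 hs)
  simpa only [f.lt_iff_lt] using this

section Cut

variable {c d : ℕ} (h : c + d = n)

def leftEmb : Fin c ↪o Fin n :=
  Fin.castLEOrderEmb (by omega)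

def rightEmb : Fin d ↪o Fin n :=
  OrderEmbedding.ofStrictMono (fun t => ⟨c + t, by omega⟩) fun _ _ hlt =>
    Fin.mk_lt_mk.2 (Nat.add_lt_add_left hlt c)

theorem leftEmb_val (x : Fin c) : (leftEmb h x : ℕ) = x := rfl

theorem rightEmb_val (t : Fin d) : (rightEmb h t : ℕ) = c + t := rfl

theorem mem_range_leftEmb {x : Fin n} : x ∈ Set.range (leftEmb h) ↔ (x : ℕ) < c :=
  ⟨by rintro ⟨y, rfl⟩; exact y.2, fun hx => ⟨⟨x, hx⟩, rfl⟩⟩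

theorem mem_range_rightEmb {x : Fin n} : x ∈ Set.range (rightEmb h) ↔ c ≤ (x : ℕ) :=
  ⟨by rintro ⟨y, rfl⟩; simp [rightEmb_val], fun hx =>
    ⟨⟨x - c, by omega⟩, Fin.ext (by simp only [rightEmb_val]; omega)⟩⟩

theorem leftEmb_ne_rightEmb (s : Fin c) (t : Fin d) : leftEmb h s ≠ rightEmb h t := fun hst => by
  have := congrArg Fin.val hst
  rw [leftEmb_val, rightEmb_val] at this
  omega

theorem lt_of_mem_mapChords_leftEmb {E : Finset (Fin c × Fin c)} {q : Fin n × Fin n}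
    (hq : q ∈ mapChords (leftEmb h) E) : (q.1 : ℕ) < c ∧ (q.2 : ℕ) < c := by
  obtain ⟨p, -, rfl⟩ := (mem_mapChords _).1 hq
  exact ⟨p.1.2, p.2.2⟩

theorem le_of_mem_mapChords_rightEmb {E : Finset (Fin d × Fin d)} {q : Fin n × Fin n}
    (hq : q ∈ mapChords (rightEmb h) E) : c ≤ (q.1 : ℕ) ∧ c ≤ (q.2 : ℕ) := by
  obtain ⟨p, -, rfl⟩ := (mem_mapChords _).1 hq
  simp [rightEmb_val]

def glue (x : Finset (Fin c) × Finset (Fin c × Fin c))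
    (y : Finset (Fin d) × Finset (Fin d × Fin d)) : Finset (Fin n) × Finset (Fin n × Fin n) :=
  (x.1.map (leftEmb h).toEmbedding ∪ y.1.map (rightEmb h).toEmbedding,
    mapChords (leftEmb h) x.2 ∪ mapChords (rightEmb h) y.2)

theorem glue_restrict {z : Finset (Fin n) × Finset (Fin n × Fin n)}
    (hz : ∀ p ∈ z.2, (p.1 : ℕ) < c ↔ (p.2 : ℕ) < c) :
    glue h (restrict (leftEmb h) z) (restrict (rightEmb h) z) = z := by
  refine Prod.ext ?_ ?_
  · ext x
    simp only [glue, restrict, mem_union, mem_map, mem_preimage, RelEmbedding.coe_toEmbedding]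
    constructor
    · rintro (⟨u, hu, rfl⟩ | ⟨u, hu, rfl⟩) <;> exact hu
    · intro hx
      rcases lt_or_ge (x : ℕ) c with hxc | hxc
      · obtain ⟨u, rfl⟩ := (mem_range_leftEmb h).2 hxc
        exact Or.inl ⟨u, hx, rfl⟩
      · obtain ⟨u, rfl⟩ := (mem_range_rightEmb h).2 hxc
        exact Or.inr ⟨u, hx, rfl⟩
  · ext q
    simp only [glue, restrict, mem_union, mem_mapChords_pullChords, mem_range_leftEmb,
      mem_range_rightEmb]
    constructor
    · rintro (⟨hq, -⟩ | ⟨hq, -⟩) <;> exact hq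
    · intro hq
      have := hz q hq
      exact (lt_or_ge (q.1 : ℕ) c).imp (fun h₁ => ⟨hq, h₁, by omega⟩) fun h₁ => ⟨hq, h₁, by omega⟩

variable (x : Finset (Fin c) × Finset (Fin c × Fin c)) (y : Finset (Fin d) × Finset (Fin d × Fin d))

theorem restrict_leftEmb_glue : restrict (leftEmb h) (glue h x y) = x := by
  refine Prod.ext ?_ (pullChords_mapChords_union _ _ fun q hq => ?_)
  · ext t
    simp only [restrict, glue, mem_preimage, mem_union, mem_map, RelEmbedding.coe_toEmbedding,
      (leftEmb h).injective.eq_iff, exists_eq_right]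
    exact or_iff_left fun ⟨u, _, hu⟩ => leftEmb_ne_rightEmb h t u hu.symm
  · rw [mem_range_leftEmb, not_lt]
    exact (le_of_mem_mapChords_rightEmb h hq).1

theorem restrict_rightEmb_glue : restrict (rightEmb h) (glue h x y) = y := by
  refine Prod.ext ?_ ?_
  · ext t
    simp only [restrict, glue, mem_preimage, mem_union, mem_map, RelEmbedding.coe_toEmbedding,
      (rightEmb h).injective.eq_iff, exists_eq_right]
    exact or_iff_right fun ⟨u, _, hu⟩ => leftEmb_ne_rightEmb h u t hu
  · refine (congrArg _ (union_comm _ _)).trans (pullChords_mapChords_union _ _ fun q hq => ?_)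
    rw [mem_range_rightEmb, not_le]
    exact (lt_of_mem_mapChords_leftEmb h hq).1

theorem card_glue_fst : (glue h x y).1.card = x.1.card + y.1.card := by
  rw [glue, card_union_of_disjoint, card_map, card_map]
  refine disjoint_left.2 fun v hv hv' => ?_
  obtain ⟨s, -, rfl⟩ := mem_map.1 hv
  obtain ⟨t, -, ht⟩ := mem_map.1 hv'
  exact leftEmb_ne_rightEmb h s t ht.symm

theorem card_glue_snd : (glue h x y).2.card = x.2.card + y.2.card := by
  rw [glue, card_union_of_disjoint, card_mapChords, card_mapChords]
  refine disjoint_left.2 fun q hq hq' => ?_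
  have := (lt_of_mem_mapChords_leftEmb h hq).1
  have := (le_of_mem_mapChords_rightEmb h hq').1
  omega

variable {x y}

theorem isDiagram_glue (hx : IsDiagram x.2) (hy : IsDiagram y.2) : IsDiagram (glue h x y).2 := by
  intro p hp
  rcases mem_union.1 hp with hp | hp
  exacts [isDiagram_mapChords _ hx p hp, isDiagram_mapChords _ hy p hp]

theorem crossNum_glue (hx : crossNum x.2 = 0) (hy : crossNum y.2 = 0) :
    crossNum (glue h x y).2 = 0 := by
  refine crossNum_union_eq_zero ((crossNum_mapChords _ _).trans hx)
    ((crossNum_mapChords _ _).trans hy) fun p hp q hq => ?_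
  have := lt_of_mem_mapChords_leftEmb h hp
  have := le_of_mem_mapChords_rightEmb h hq
  constructor <;> rintro ⟨h₁, h₂, h₃⟩ <;> simp only [Fin.lt_def] at h₁ h₂ h₃ <;> omega

theorem inGaps_glue (hx : InGaps x.1 x.2) (hy : InGaps y.1 y.2) :
    InGaps (glue h x y).1 (glue h x y).2 := by
  intro p hp s hs
  simp only [glue, mem_union, mem_map, RelEmbedding.coe_toEmbedding] at hp hs
  rcases hp with hp | hp <;> rcases hs with ⟨s, hs, rfl⟩ | ⟨s, hs, rfl⟩
  · obtain ⟨p, hp', rfl⟩ := (mem_mapChords _).1 hp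
    simpa only [(leftEmb h).lt_iff_lt] using hx p hp' s hs
  · have := lt_of_mem_mapChords_leftEmb h hp
    right
    simp only [Fin.lt_def, rightEmb_val]
    omega
  · have := le_of_mem_mapChords_rightEmb h hp
    left
    simp only [Fin.lt_def, leftEmb_val]
    omega
  · obtain ⟨p, hp', rfl⟩ := (mem_mapChords _).1 hp
    simpa only [(rightEmb h).lt_iff_lt] using hy p hp' s hs

theorem exists_le_glue (hx : ∀ t, ∃ s ∈ x.1, s ≤ t) (hy : ∀ t, ∃ s ∈ y.1, s ≤ t) (v : Fin n) :
    ∃ s ∈ (glue h x y).1, s ≤ v := by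
  simp only [glue, mem_union, mem_map, RelEmbedding.coe_toEmbedding]
  rcases lt_or_ge (v : ℕ) c with hv | hv
  · obtain ⟨t, rfl⟩ := (mem_range_leftEmb h).2 hv
    obtain ⟨s, hs, hst⟩ := hx t
    exact ⟨_, Or.inl ⟨s, hs, rfl⟩, (leftEmb h).le_iff_le.2 hst⟩
  · obtain ⟨t, rfl⟩ := (mem_range_rightEmb h).2 hv
    obtain ⟨s, hs, hst⟩ := hy t
    exact ⟨_, Or.inr ⟨s, hs, rfl⟩, (rightEmb h).le_iff_le.2 hst⟩

theorem card_restrict_leftEmb_snd {z : Finset (Fin n) × Finset (Fin n × Fin n)}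
    (hz : IsDiagram z.2) :
    (restrict (leftEmb h) z).2.card = (z.2.filter fun p => (p.2 : ℕ) < c).card := by
  rw [← card_mapChords (leftEmb h)]
  congr 1
  ext q
  rw [restrict, mem_mapChords_pullChords, mem_range_leftEmb, mem_range_leftEmb, mem_filter]
  refine ⟨fun ⟨hq, _, h₂⟩ => ⟨hq, h₂⟩, fun ⟨hq, h₂⟩ => ⟨hq, ?_, h₂⟩⟩
  have := Fin.lt_def.1 (hz q hq)
  omega

end Cut

theorem IsBlockDiagram.restrict (f : Fin a ↪o Fin b) {z : Finset (Fin b) × Finset (Fin b × Fin b)}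
    (hz : IsBlockDiagram z) (hf : ∀ t, ∃ s, f s ∈ z.1 ∧ s ≤ t) :
    IsBlockDiagram (ChordDiagram.restrict f z) :=
  ⟨fun t => (hf t).imp fun _ hs => ⟨(mem_restrict_fst f).2 hs.1, hs.2⟩,
    isDiagram_pullChords f hz.2.1, Nat.eq_zero_of_le_zero (hz.2.2.1 ▸ crossNum_pullChords_le f _),
    inGaps_restrict f hz.2.2.2⟩

theorem IsBlockDiagram.glue {c d : ℕ} (h : c + d = n) {x : Finset (Fin c) × Finset (Fin c × Fin c)}
    {y : Finset (Fin d) × Finset (Fin d × Fin d)} (hx : IsBlockDiagram x) (hy : IsBlockDiagram y) :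
    IsBlockDiagram (ChordDiagram.glue h x y) :=
  ⟨exists_le_glue h hx.1 hy.1, isDiagram_glue h hx.2.1 hy.2.1, crossNum_glue h hx.2.2.1 hy.2.2.1,
    inGaps_glue h hx.2.2.2 hy.2.2.2⟩

theorem marks_eq_singleton_zero {d q : ℕ} (x : BlockSeq 1 d q) :
    ∃ hd : 0 < d, x.1.1 = {⟨0, hd⟩} := by
  obtain ⟨s, hs⟩ := card_eq_one.1 x.2.2.1
  have hd : 0 < d := Fin.pos s
  obtain ⟨s', hs', hle⟩ := x.2.1.1 ⟨0, hd⟩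
  rw [hs, mem_singleton] at hs'
  subst hs'
  exact ⟨hd, hs.trans (congrArg _ (le_antisymm hle (Fin.mk_le_mk.2 (Nat.zero_le _))))⟩

section LastBlock

variable {k n q : ℕ}

theorem marks_nonempty (y : BlockSeq (k + 1) n q) : y.1.1.Nonempty :=
  card_pos.1 (y.2.2.1.symm ▸ k.succ_pos)

noncomputable def lastMark (y : BlockSeq (k + 1) n q) : Fin n :=
  y.1.1.max' (marks_nonempty y)

theorem lastMark_mem (y : BlockSeq (k + 1) n q) : lastMark y ∈ y.1.1 :=
  max'_mem _ _

theorem le_lastMark (y : BlockSeq (k + 1) n q) {s : Fin n} (hs : s ∈ y.1.1) : s ≤ lastMark y :=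
  le_max' _ _ hs

theorem lt_lastMark_iff (y : BlockSeq (k + 1) n q) {p : Fin n × Fin n} (hp : p ∈ y.1.2) :
    p.1 < lastMark y ↔ p.2 < lastMark y := by
  have := y.2.1.2.1 p hp
  rcases y.2.1.2.2.2 p hp _ (lastMark_mem y) with h | h
  · exact iff_of_false (lt_asymm h) (lt_asymm (h.trans this))
  · exact iff_of_true (this.trans h) h

theorem restrict_rightEmb_lastMark {c d : ℕ} (h : c + d = n) (y : BlockSeq (k + 1) n q)
    (hc : (lastMark y : ℕ) = c) :
    (restrict (rightEmb h) y.1).1 = {⟨0, by have := (lastMark y).2; omega⟩} := by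
  ext t
  rw [mem_restrict_fst, mem_singleton, Fin.ext_iff]
  constructor
  · intro ht
    have := Fin.le_def.1 (le_lastMark y ht)
    rw [rightEmb_val] at this
    exact (by omega : (t : ℕ) = 0)
  · intro ht
    convert lastMark_mem y
    exact Fin.ext (by rw [rightEmb_val, ht]; exact hc.symm)

/-- The monomial `x^c y^r` counting the `c` vertices and `r` chords before the last mark. -/
noncomputable def headSize {e : Fin 2 →₀ ℕ} (y : BlockSeq (k + 1) (e 0) (e 1)) : Fin 2 →₀ ℕ :=
  Finsupp.single 0 (lastMark y : ℕ) +
    Finsupp.single 1 (y.1.2.filter fun p => (p.2 : ℕ) < lastMark y).card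

theorem headSize_eq_iff {e e₁ : Fin 2 →₀ ℕ} (y : BlockSeq (k + 1) (e 0) (e 1)) :
    headSize y = e₁ ↔ (lastMark y : ℕ) = e₁ 0 ∧
      (y.1.2.filter fun p => (p.2 : ℕ) < lastMark y).card = e₁ 1 := by
  rw [Finsupp.ext_iff, Fin.forall_fin_two]
  simp [headSize]

theorem headSize_le {e : Fin 2 →₀ ℕ} (y : BlockSeq (k + 1) (e 0) (e 1)) : headSize y ≤ e := by
  intro i
  fin_cases i
  · simp [headSize]
  · simpa [headSize] using (card_filter_le _ _).trans_eq y.2.2.2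

theorem add_apply_eq {e e₁ e₂ : Fin 2 →₀ ℕ} (he : e₁ + e₂ = e) (i : Fin 2) :
    e₁ i + e₂ i = e i := by
  rw [← he, Finsupp.add_apply]

variable {e e₁ e₂ : Fin 2 →₀ ℕ} (he : e₁ + e₂ = e)

theorem glue_restrict_of_headSize_eq (y : BlockSeq (k + 1) (e 0) (e 1)) (hy : headSize y = e₁) :
    let h := add_apply_eq he 0
    glue h (restrict (leftEmb h) y.1) (restrict (rightEmb h) y.1) = y.1 :=
  glue_restrict _ fun p hp => by
    rw [← ((headSize_eq_iff y).1 hy).1]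
    exact lt_lastMark_iff y hp

theorem isBlockSeq_restrict_of_headSize_eq (y : BlockSeq (k + 1) (e 0) (e 1))
    (hy : headSize y = e₁) :
    let h := add_apply_eq he 0
    let x₁ := restrict (leftEmb h) y.1
    let x₂ := restrict (rightEmb h) y.1
    (IsBlockDiagram x₁ ∧ x₁.1.card = k ∧ x₁.2.card = e₁ 1) ∧
      (IsBlockDiagram x₂ ∧ x₂.1.card = 1 ∧ x₂.2.card = e₂ 1) := by
  intro h x₁ x₂
  obtain ⟨hc, hq⟩ := (headSize_eq_iff y).1 hy
  have hglue := glue_restrict_of_headSize_eq he y hy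
  have hx₂ := restrict_rightEmb_lastMark h y hc
  have hcard₁ := card_glue_fst h x₁ x₂
  have hcard₂ := card_glue_snd h x₁ x₂
  have hx₁ : x₁.2.card = e₁ 1 := (card_restrict_leftEmb_snd h y.2.1.2.1).trans (hc ▸ hq)
  rw [hglue, hx₂, card_singleton, y.2.2.1] at hcard₁
  rw [hglue, y.2.2.2, hx₁, ← add_apply_eq he 1] at hcard₂
  refine ⟨⟨y.2.1.restrict _ fun t => ?_, by omega, hx₁⟩,
    ⟨y.2.1.restrict _ fun t => ?_, by rw [hx₂, card_singleton], by omega⟩⟩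
  · obtain ⟨s, hs, hst⟩ := y.2.1.1 (leftEmb h t)
    obtain ⟨s, rfl⟩ := (mem_range_leftEmb h).2 (lt_of_le_of_lt (Fin.le_def.1 hst) t.2)
    exact ⟨s, hs, (leftEmb h).le_iff_le.1 hst⟩
  · refine ⟨⟨0, by have := (lastMark y).2; omega⟩, ?_, Fin.mk_le_mk.2 (Nat.zero_le _)⟩
    rw [← mem_restrict_fst]
    exact hx₂ ▸ mem_singleton_self _

theorem isBlockSeq_glue (x₁ : BlockSeq k (e₁ 0) (e₁ 1)) (x₂ : BlockSeq 1 (e₂ 0) (e₂ 1)) :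
    let z := glue (add_apply_eq he 0) x₁.1 x₂.1
    IsBlockDiagram z ∧ z.1.card = k + 1 ∧ z.2.card = e 1 :=
  ⟨x₁.2.1.glue _ x₂.2.1, by rw [card_glue_fst, x₁.2.2.1, x₂.2.2.1],
    by rw [card_glue_snd, x₁.2.2.2, x₂.2.2.2, add_apply_eq he 1]⟩

theorem headSize_glue (x₁ : BlockSeq k (e₁ 0) (e₁ 1)) (x₂ : BlockSeq 1 (e₂ 0) (e₂ 1)) :
    headSize (⟨_, isBlockSeq_glue he x₁ x₂⟩ : BlockSeq (k + 1) (e 0) (e 1)) = e₁ := by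
  set h := add_apply_eq he 0
  set y : BlockSeq (k + 1) (e 0) (e 1) := ⟨_, isBlockSeq_glue he x₁ x₂⟩
  obtain ⟨hd, hx₂⟩ := marks_eq_singleton_zero x₂
  have hmem : rightEmb h ⟨0, hd⟩ ∈ y.1.1 :=
    mem_union_right _ (mem_map_of_mem _ (hx₂ ▸ mem_singleton_self _))
  have hle (s : Fin (e 0)) (hs : s ∈ y.1.1) : s ≤ rightEmb h ⟨0, hd⟩ := by
    simp only [y, glue, mem_union, mem_map, RelEmbedding.coe_toEmbedding, hx₂,
      mem_singleton] at hs
    rcases hs with ⟨t, -, rfl⟩ | ⟨t, rfl, rfl⟩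
    · exact Fin.le_def.2 (by rw [leftEmb_val, rightEmb_val]; omega)
    · exact le_rfl
  have hlast : (lastMark y : ℕ) = e₁ 0 := by
    have : lastMark y = rightEmb h ⟨0, hd⟩ := le_antisymm (max'_le _ _ _ hle) (le_lastMark y hmem)
    rw [this, rightEmb_val, Fin.val_mk, add_zero]
  refine (headSize_eq_iff y).2 ⟨hlast, ?_⟩
  rw [hlast, ← card_restrict_leftEmb_snd h (x₁.2.1.glue h x₂.2.1).2.1, restrict_leftEmb_glue,
    x₁.2.2.2]

noncomputable def splitLastBlock :
    {y : BlockSeq (k + 1) (e 0) (e 1) // (headSize y, e - headSize y) = (e₁, e₂)} ≃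
      BlockSeq k (e₁ 0) (e₁ 1) × BlockSeq 1 (e₂ 0) (e₂ 1) where
  toFun := fun ⟨y, hy⟩ =>
    have hx := isBlockSeq_restrict_of_headSize_eq he y (congrArg Prod.fst hy)
    (⟨_, hx.1⟩, ⟨_, hx.2⟩)
  invFun := fun ⟨x₁, x₂⟩ => ⟨⟨_, isBlockSeq_glue he x₁ x₂⟩, by
    rw [headSize_glue he x₁ x₂, ← he, add_tsub_cancel_left]⟩
  left_inv := fun ⟨y, hy⟩ =>
    Subtype.ext (Subtype.ext (glue_restrict_of_headSize_eq he y (congrArg Prod.fst hy)))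
  right_inv := fun ⟨x₁, x₂⟩ =>
    Prod.ext (Subtype.ext (restrict_leftEmb_glue _ _ _))
      (Subtype.ext (restrict_rightEmb_glue _ _ _))

end LastBlock

theorem card_blockSeq_succ (k : ℕ) (e : Fin 2 →₀ ℕ) :
    Nat.card (BlockSeq (k + 1) (e 0) (e 1)) = ∑ x ∈ antidiagonal e,
      Nat.card (BlockSeq k (x.1 0) (x.1 1)) * Nat.card (BlockSeq 1 (x.2 0) (x.2 1)) := by
  rw [natCard_eq_sum_natCard_fiber (fun y => (headSize y, e - headSize y)) _
    fun y => mem_antidiagonal.2 (add_tsub_cancel_of_le (headSize_le y))]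
  refine sum_congr rfl fun ⟨e₁, e₂⟩ he => ?_
  rw [← Nat.card_prod]
  exact Nat.card_congr (splitLastBlock (mem_antidiagonal.1 he))

theorem card_blockSeq_zero (n q : ℕ) :
    Nat.card (BlockSeq 0 n q) = if n = 0 ∧ q = 0 then 1 else 0 := by
  have key (z : BlockSeq 0 n q) : n = 0 ∧ q = 0 ∧ z.1 = (∅, ∅) := by
    obtain ⟨⟨S, G⟩, ⟨hS, -⟩, hk, hq⟩ := z
    rw [card_eq_zero] at hk
    subst hk
    obtain rfl : n = 0 := Nat.eq_zero_of_not_pos fun hn => by simpa using hS ⟨0, hn⟩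
    exact ⟨rfl, hq ▸ by simp [eq_empty_of_isEmpty G], by simp [eq_empty_of_isEmpty G]⟩
  split_ifs with h
  · obtain ⟨rfl, rfl⟩ := h
    refine Nat.card_eq_one_iff_exists.2 ⟨⟨(∅, ∅), ⟨fun x => x.elim0, ?_, ?_, ?_⟩, rfl, rfl⟩,
      fun z => Subtype.ext ((key z).2.2)⟩
    · exact fun p hp => (notMem_empty p hp).elim
    · rfl
    · exact fun p hp => (notMem_empty p hp).elim
  · have : IsEmpty (BlockSeq 0 n q) := ⟨fun z => h ⟨(key z).1, (key z).2.1⟩⟩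
    exact Nat.card_of_isEmpty

theorem mapChords_succ_pullChords {n q : ℕ} (z : BlockSeq 1 (n + 1) q) :
    mapChords (Fin.succOrderEmb n) (pullChords (Fin.succOrderEmb n) z.1.2) = z.1.2 := by
  obtain ⟨hd, hz⟩ := marks_eq_singleton_zero z
  ext p
  rw [mem_mapChords_pullChords]
  refine ⟨fun hp => hp.1, fun hp => ⟨hp, ?_⟩⟩
  have h0 := z.2.1.2.2.2 p hp 0 (hz ▸ mem_singleton_self _)
  have h12 := z.2.1.2.1 p hp
  have hp₁ : (0 : Fin (n + 1)) < p.1 := h0.resolve_right (Fin.not_lt_zero _)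
  exact ⟨Fin.exists_succ_eq.2 hp₁.ne', Fin.exists_succ_eq.2 (hp₁.trans h12).ne'⟩

noncomputable def blockSeqOneEquiv (n q : ℕ) : BlockSeq 1 (n + 1) q ≃ NoncrossingDiagram n q where
  toFun z := ⟨pullChords (Fin.succOrderEmb n) z.1.2, isDiagram_pullChords _ z.2.1.2.1,
    Nat.eq_zero_of_le_zero (z.2.1.2.2.1 ▸ crossNum_pullChords_le _ _),
    by rw [← card_mapChords (Fin.succOrderEmb n), mapChords_succ_pullChords, z.2.2.2]⟩
  invFun D := ⟨({0}, mapChords (Fin.succOrderEmb n) D.1),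
    ⟨fun x => ⟨0, mem_singleton_self _, Fin.zero_le x⟩, isDiagram_mapChords _ D.2.1,
      (crossNum_mapChords _ _).trans D.2.2.1, fun p hp s hs => by
        obtain ⟨p, -, rfl⟩ := (mem_mapChords _).1 hp
        exact Or.inl ((mem_singleton.1 hs) ▸ Fin.succ_pos _)⟩,
    card_singleton _, (card_mapChords _ _).trans D.2.2.2⟩
  left_inv z := Subtype.ext (Prod.ext (marks_eq_singleton_zero z).2.symm
    (mapChords_succ_pullChords z))
  right_inv D := Subtype.ext (pullChords_mapChords _ _)

theorem coeff_X_zero_mul_diagGF0 (e : Fin 2 →₀ ℕ) :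
    MvPowerSeries.coeff e (MvPowerSeries.X 0 * diagGF0) =
      (Nat.card (BlockSeq 1 (e 0) (e 1)) : ℚ) := by
  rw [MvPowerSeries.X_def, MvPowerSeries.coeff_monomial_mul]
  split_ifs with h
  · obtain ⟨n, hn⟩ : ∃ n, e 0 = n + 1 := Nat.exists_eq_add_of_le' (by simpa using h 0)
    rw [one_mul, hn, Nat.card_congr (blockSeqOneEquiv n (e 1))]
    change (Nat.card (NoncrossingDiagram _ _) : ℚ) = _
    simp [hn]
  · have : e 0 = 0 := by
      by_contra h0
      exact h fun i => by fin_cases i <;> simp; omega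
    have : IsEmpty (BlockSeq 1 (e 0) (e 1)) := ⟨fun z => (Fin.pos (lastMark (k := 0) z)).ne' this⟩
    simp

theorem coeff_X_zero_mul_diagGF0_pow (k : ℕ) (e : Fin 2 →₀ ℕ) :
    MvPowerSeries.coeff e ((MvPowerSeries.X 0 * diagGF0) ^ k) =
      (Nat.card (BlockSeq k (e 0) (e 1)) : ℚ) := by
  induction k generalizing e with
  | zero =>
    rw [pow_zero, MvPowerSeries.coeff_one, card_blockSeq_zero]
    simp [Finsupp.ext_iff, Fin.forall_fin_two]
  | succ k ih =>
    rw [pow_succ, MvPowerSeries.coeff_mul, card_blockSeq_succ, Nat.cast_sum]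
    exact sum_congr rfl fun x _ => by rw [ih, coeff_X_zero_mul_diagGF0, Nat.cast_mul]

theorem coeff_mul_X_one_pow (φ : MvPowerSeries (Fin 2) ℚ) {e : Fin 2 →₀ ℕ} {j : ℕ}
    (hj : j ≤ e 1) :
    MvPowerSeries.coeff e (φ * MvPowerSeries.X 1 ^ j) =
      MvPowerSeries.coeff (e - Finsupp.single 1 j) φ := by
  rw [MvPowerSeries.X_pow_eq, MvPowerSeries.coeff_mul_monomial, if_pos, mul_one]
  intro i
  fin_cases i <;> simp [hj]

theorem coeff_connDiagGF0 (k j : ℕ) :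
    MvPowerSeries.coeff (Finsupp.single 0 k + Finsupp.single 1 j) connDiagGF0 =
      (Nat.card (ConnectedDiagram k j) : ℚ) := by
  change (Nat.card (ConnectedDiagram _ _) : ℚ) = _
  simp

theorem card_connectedDiagram_zero (j : ℕ) : Nat.card (ConnectedDiagram 0 j) = 0 :=
  have : IsEmpty (ConnectedDiagram 0 j) := ⟨fun D => D.2.2.2.2.nonempty.some.elim0⟩
  Nat.card_of_isEmpty

theorem card_noncrossingDiagram_zero (m : ℕ) :
    Nat.card (NoncrossingDiagram 0 m) = if m = 0 then 1 else 0 := by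
  have key (D : NoncrossingDiagram 0 m) : D.1 = ∅ := eq_empty_of_isEmpty _
  split_ifs with hm
  · subst hm
    exact Nat.card_eq_one_iff_exists.2 ⟨⟨∅, fun p hp => (notMem_empty p hp).elim, by
      simp [crossNum], rfl⟩, fun D => Subtype.ext (key D)⟩
  · have : IsEmpty (NoncrossingDiagram 0 m) := ⟨fun D => hm (by rw [← D.2.2.2, key D, card_empty])⟩
    exact Nat.card_of_isEmpty

end ChordDiagram

open ChordDiagram

/-- If `C(x,y)` is the generating function of connected crossing-free chord
diagrams and `D₀(x,y)` that of all crossing-free chord diagrams, then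
`D₀(x,y) = 1 + C(x·D₀(x,y), y)`. The substitution is stated coefficientwise:
`C(x·D₀, y) = Σ_{n,m} c_{n,m} (x·D₀)^n y^m`, and for a given monomial `e` only
the summands with `n ≤ e(0)` and `m ≤ e(1)` can contribute, so the sum may be
truncated there. -/
theorem diagGF0_eq_one_add_connDiagGF0_subst :
    ∀ e : Fin 2 →₀ ℕ,
      MvPowerSeries.coeff e diagGF0 =
        MvPowerSeries.coeff e (1 : MvPowerSeries (Fin 2) ℚ) +
          ∑ nm ∈ Finset.range (e 0 + 1) ×ˢ Finset.range (e 1 + 1),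
            MvPowerSeries.coeff
                (Finsupp.single (0 : Fin 2) nm.1 + Finsupp.single (1 : Fin 2) nm.2)
                connDiagGF0 *
              MvPowerSeries.coeff e
                ((MvPowerSeries.X 0 * diagGF0) ^ nm.1 * MvPowerSeries.X 1 ^ nm.2) := by
  intro e
  change (Nat.card (NoncrossingDiagram (e 0) (e 1)) : ℚ) = _
  rcases Nat.eq_zero_or_pos (e 0) with hn | hn
  · have he : e = 0 ↔ e 1 = 0 := by simp [Finsupp.ext_iff, Fin.forall_fin_two, hn]
    rw [hn, card_noncrossingDiagram_zero, MvPowerSeries.coeff_one, sum_eq_zero, add_zero]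
    · simp [he]
    rintro ⟨k, j⟩ hkj
    obtain rfl : k = 0 := by simpa [hn] using (mem_product.1 hkj).1
    rw [coeff_connDiagGF0, card_connectedDiagram_zero, Nat.cast_zero, zero_mul]
  · have : NeZero (e 0) := ⟨hn.ne'⟩
    rw [MvPowerSeries.coeff_one, if_neg fun he => hn.ne' (by simp [he]), zero_add,
      card_noncrossingDiagram, Nat.cast_sum]
    refine sum_congr rfl fun ⟨k, j⟩ hkj => ?_
    have hj : j ≤ e 1 := Nat.lt_succ_iff.1 (mem_range.1 (mem_product.1 hkj).2)
    rw [coeff_connDiagGF0, coeff_mul_X_one_pow _ hj, coeff_X_zero_mul_diagGF0_pow, Nat.cast_mul]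
    simp
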